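/- arXiv:1009.3068 — 9 statements merged into one kernel-verified Lean document; each statement's English description precedes it below -/
import Mathlib

section
/- Let c > 0, let b : ℝ → ℝ be twice differentiable with b(τ) > 0 for all τ, let f : ℝ → ℝ be twice differentiable, and let h : ℝ → ℝ. Suppose that for all τ: (1/b(τ)²) f″(τ) − (b′(τ)/b(τ)³) f′(τ) = h(τ). Define g(τ) := √(c/b(τ)) · f(τ) (so that f = √(b/c)·g). Then g is twice differentiable and for all τ: (1/b(τ)²) g″(τ) + ( b″(τ)/(2 b(τ)³) − 3 b′(τ)²/(4 b(τ)⁴) ) g(τ) = √(c/b(τ)) · h(τ). -/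
/-!
Write `g = w f` with the weight `w = √(c/b)`, whose logarithmic derivative is `k = -b′/(2b)`.
Then `w″ = (k′ + k²) w` and Leibniz gives `g″ = w (f″ + 2k f′ + (k′ + k²) f)`. Dividing by `b²`,
the term `2k f′/b² = -(b′/b³) f′` reproduces the damping term, while
`(k′ + k²)/b² = -b″/(2b³) + 3b′²/(4b⁴)` is cancelled exactly by the effective mass term.
-/

open Real

theorem deriv_mul_eq_fun {w f : ℝ → ℝ} (hw : Differentiable ℝ w) (hf : Differentiable ℝ f) :
    deriv (fun y => w y * f y) = fun y => deriv w y * f y + w y * deriv f y :=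
  funext fun y => deriv_fun_mul (hw y) (hf y)

theorem differentiable_deriv_mul {w f : ℝ → ℝ} (hw : Differentiable ℝ w)
    (hw' : Differentiable ℝ (deriv w)) (hf : Differentiable ℝ f)
    (hf' : Differentiable ℝ (deriv f)) : Differentiable ℝ (deriv fun y => w y * f y) := by
  rw [deriv_mul_eq_fun hw hf]
  exact (hw'.mul hf).add (hw.mul hf')

theorem deriv_deriv_mul {w f : ℝ → ℝ} (hw : Differentiable ℝ w)
    (hw' : Differentiable ℝ (deriv w)) (hf : Differentiable ℝ f)
    (hf' : Differentiable ℝ (deriv f)) (x : ℝ) :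
    deriv (deriv fun y => w y * f y) x =
      deriv (deriv w) x * f x + 2 * (deriv w x * deriv f x) + w x * deriv (deriv f) x := by
  rw [deriv_mul_eq_fun hw hf, deriv_fun_add ((hw' x).fun_mul (hf x)) ((hw x).fun_mul (hf' x)),
    deriv_fun_mul (hw' x) (hf x), deriv_fun_mul (hw x) (hf' x)]
  ring

theorem deriv_deriv_of_deriv_eq_mul {w k : ℝ → ℝ} (hw : Differentiable ℝ w)
    (hk : Differentiable ℝ k) (hwk : ∀ x, deriv w x = k x * w x) (x : ℝ) :
    deriv (deriv w) x = (deriv k x + k x ^ 2) * w x := by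
  rw [funext hwk, deriv_fun_mul (hk x) (hw x), hwk]
  ring

theorem hasDerivAt_sqrt_div {c : ℝ} (hc : 0 < c) {b : ℝ → ℝ} {x : ℝ}
    (hb : DifferentiableAt ℝ b x) (hbx : 0 < b x) :
    HasDerivAt (fun y => √(c / b y)) (-(deriv b x / (2 * b x)) * √(c / b x)) x := by
  have hquot : HasDerivAt (fun y => c / b y) (-(c * deriv b x) / b x ^ 2) x := by
    simpa using (hasDerivAt_const x c).fun_div hb.hasDerivAt hbx.ne'
  convert hquot.sqrt (div_pos hc hbx).ne' using 1
  have hsq : √(c / b x) ^ 2 = c / b x := sq_sqrt (div_pos hc hbx).le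
  have hpos : 0 < √(c / b x) := sqrt_pos.mpr (div_pos hc hbx)
  field_simp
  rw [hsq]
  field_simp

/-- The scale transformation `g := √(c/b)·f` turns the damped wave equation
`(1/b²) f″ − (b′/b³) f′ = h` into the Klein–Gordon-type equation
`(1/b²) g″ + ( b″/(2b³) − 3b′²/(4b⁴) ) g = √(c/b)·h`. -/
theorem stmt2 (c : ℝ) (hc : 0 < c)
    (b : ℝ → ℝ) (hb1 : Differentiable ℝ b) (hb2 : Differentiable ℝ (deriv b))
    (hbpos : ∀ τ, 0 < b τ)
    (f : ℝ → ℝ) (hf1 : Differentiable ℝ f) (hf2 : Differentiable ℝ (deriv f))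
    (h : ℝ → ℝ)
    (hwave : ∀ τ, (1 / (b τ) ^ 2) * deriv (deriv f) τ
        - (deriv b τ / (b τ) ^ 3) * deriv f τ = h τ)
    (g : ℝ → ℝ) (hg : g = fun τ => Real.sqrt (c / b τ) * f τ) :
    Differentiable ℝ g ∧ Differentiable ℝ (deriv g) ∧
    ∀ τ, (1 / (b τ) ^ 2) * deriv (deriv g) τ
        + (deriv (deriv b) τ / (2 * (b τ) ^ 3)
            - 3 * (deriv b τ) ^ 2 / (4 * (b τ) ^ 4)) * g τ
      = Real.sqrt (c / b τ) * h τ := by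
  set w : ℝ → ℝ := fun τ => √(c / b τ)
  set k : ℝ → ℝ := fun τ => -(deriv b τ / (2 * b τ))
  have hbne : ∀ τ, b τ ≠ 0 := fun τ => (hbpos τ).ne'
  have hw_deriv : ∀ τ, HasDerivAt w (k τ * w τ) τ :=
    fun τ => hasDerivAt_sqrt_div hc (hb1 τ) (hbpos τ)
  have hw : Differentiable ℝ w := fun τ => (hw_deriv τ).differentiableAt
  have hk : Differentiable ℝ k := fun τ => ((hb2 τ).div (by fun_prop) (by simp [hbne])).neg
  have hw' : Differentiable ℝ (deriv w) := by
    rw [funext fun τ => (hw_deriv τ).deriv]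
    exact hk.mul hw
  have hk_deriv : ∀ τ, deriv k τ =
      -((deriv (deriv b) τ * (2 * b τ) - deriv b τ * (2 * deriv b τ)) / (2 * b τ) ^ 2) :=
    fun τ => (((hb2 τ).hasDerivAt.fun_div ((hb1 τ).hasDerivAt.const_mul 2)
      (mul_ne_zero two_ne_zero (hbne τ))).neg).deriv
  subst hg
  refine ⟨hw.mul hf1, differentiable_deriv_mul hw hw' hf1 hf2, fun τ => ?_⟩
  rw [deriv_deriv_mul hw hw' hf1 hf2,
    deriv_deriv_of_deriv_eq_mul hw hk (fun τ => (hw_deriv τ).deriv), (hw_deriv τ).deriv,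
    hk_deriv, ← hwave τ]
  simp only [w, k]
  have hbτ := hbne τ
  field_simp
  ring
end

section
/- Let c > 0 and let v ∈ ℝ³ with 0 < ‖v‖ < c; set γ := (1 − ‖v‖²/c²)^{−1/2}. For u ∈ ℝ³ let b := √(c² + ‖u‖²), and define u* := u/γ − (1 − γ)(⟨v, u⟩/(γ‖v‖²)) v, u′ := γ(u* − (v/c) b), and b′ := γ(b − ⟨u, v⟩/c). Then b′ > 0 and b′ = √(c² + ‖u′‖²) (equivalently b′² − ‖u′‖² = c²). Moreover, with u′* := u′/γ − (1 − γ)(⟨v, u′⟩/(γ‖v‖²)) v, the inverse relations hold: u = γ(u′* + (v/c) b′) and b = γ(b′ + ⟨u′, v⟩/c). -/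
/-!
The pair `(b, u)` is a four-vector on the mass shell `b² - ‖u‖² = c²`, and `(b', u')` is its
image under the standard Lorentz boost with velocity `v`. A boost preserves the Minkowski form
`b² - ‖u‖²` and is inverted by the boost with velocity `-v`, which gives the second and the last
two claims. Positivity of `b'` is Cauchy–Schwarz: `⟪u, v⟫ ≤ ‖u‖ ‖v‖ < b c`.
-/

open scoped RealInnerProductSpace

noncomputable section

namespace ProperTime

lemma one_sub_sq_div_sq_pos {x c : ℝ} (hx : 0 ≤ x) (hxc : x < c) : 0 < 1 - x ^ 2 / c ^ 2 := by
  rw [sub_pos, div_lt_one (by nlinarith)]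
  exact pow_lt_pow_left₀ hxc hx two_ne_zero

def lorentzFactor {E : Type*} [Norm E] (c : ℝ) (v : E) : ℝ := (√(1 - ‖v‖ ^ 2 / c ^ 2))⁻¹

section LorentzFactor

variable {E : Type*} [SeminormedAddGroup E] {c : ℝ} {v : E}

@[simp]
lemma lorentzFactor_neg : lorentzFactor c (-v) = lorentzFactor c v := by
  simp [lorentzFactor]

lemma lorentzFactor_pos (hvc : ‖v‖ < c) : 0 < lorentzFactor c v :=
  inv_pos.mpr (Real.sqrt_pos.mpr (one_sub_sq_div_sq_pos (norm_nonneg v) hvc))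

lemma lorentzFactor_sq_mul (hvc : ‖v‖ < c) :
    lorentzFactor c v ^ 2 * (c ^ 2 - ‖v‖ ^ 2) = c ^ 2 := by
  have hc : c ≠ 0 := ((norm_nonneg v).trans_lt hvc).ne'
  have hcv : c ^ 2 - ‖v‖ ^ 2 ≠ 0 :=
    (sub_pos.mpr (pow_lt_pow_left₀ hvc (norm_nonneg v) two_ne_zero)).ne'
  rw [lorentzFactor, inv_pow, Real.sq_sqrt (one_sub_sq_div_sq_pos (norm_nonneg v) hvc).le]
  field_simp

end LorentzFactor

section Boost

variable {E : Type*} [NormedAddCommGroup E] [InnerProductSpace ℝ E] {c : ℝ} {v : E}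

/-- The paper's `u*`: the component of `u` orthogonal to `v` is divided by the Lorentz factor. -/
def perpContraction (c : ℝ) (v u : E) : E :=
  (lorentzFactor c v)⁻¹ • u -
    ((1 - lorentzFactor c v) * (⟪v, u⟫ / (lorentzFactor c v * ‖v‖ ^ 2))) • v

/-- `(boostTime c v b u, boostSpace c v b u)` is the Lorentz boost with velocity `v` of the
four-vector `(b, u)`, the paper's `(b', u')`. -/
def boostTime (c : ℝ) (v : E) (b : ℝ) (u : E) : ℝ := lorentzFactor c v * (b - ⟪u, v⟫ / c)

def boostSpace (c : ℝ) (v : E) (b : ℝ) (u : E) : E :=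
  u + ((lorentzFactor c v - 1) * ⟪v, u⟫ / ‖v‖ ^ 2 - lorentzFactor c v * b / c) • v

lemma boostTime_neg (b : ℝ) (u : E) :
    boostTime c (-v) b u = lorentzFactor c v * (b + ⟪u, v⟫ / c) := by
  rw [boostTime, lorentzFactor_neg, inner_neg_right, neg_div, sub_neg_eq_add]

lemma boostSpace_eq_smul_perpContraction_sub (hvc : ‖v‖ < c) (b : ℝ) (u : E) :
    boostSpace c v b u = lorentzFactor c v • (perpContraction c v u - (b / c) • v) := by
  have hγ := (lorentzFactor_pos hvc).ne'
  rw [boostSpace, perpContraction]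
  match_scalars
  · field_simp
  · field_simp
    ring

lemma boostSpace_neg_eq_smul_perpContraction_add (hvc : ‖v‖ < c) (b : ℝ) (u : E) :
    boostSpace c (-v) b u = lorentzFactor c v • (perpContraction c v u + (b / c) • v) := by
  have hγ := (lorentzFactor_pos hvc).ne'
  rw [boostSpace, perpContraction, lorentzFactor_neg, inner_neg_left, norm_neg]
  match_scalars
  · field_simp
  · field_simp
    ring

lemma boostTime_pos (hvc : ‖v‖ < c) {b : ℝ} {u : E} (hub : ‖u‖ < b) :
    0 < boostTime c v b u := by
  have hc : 0 < c := (norm_nonneg v).trans_lt hvc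
  refine mul_pos (lorentzFactor_pos hvc) (sub_pos.mpr ((div_lt_iff₀ hc).mpr ?_))
  calc ⟪u, v⟫ ≤ ‖u‖ * ‖v‖ := real_inner_le_norm u v
    _ < b * c := mul_lt_mul'' hub hvc (norm_nonneg u) (norm_nonneg v)

lemma inner_boostSpace (b : ℝ) (u : E) : ⟪v, boostSpace c v b u⟫ =
    ⟪v, u⟫ + ((lorentzFactor c v - 1) * ⟪v, u⟫ / ‖v‖ ^ 2 - lorentzFactor c v * b / c) * ‖v‖ ^ 2 := by
  rw [boostSpace, inner_add_right, real_inner_smul_right, real_inner_self_eq_norm_sq]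

lemma boostTime_sq_sub_norm_boostSpace_sq (hvc : ‖v‖ < c) (hv : v ≠ 0) (b : ℝ) (u : E) :
    boostTime c v b u ^ 2 - ‖boostSpace c v b u‖ ^ 2 = b ^ 2 - ‖u‖ ^ 2 := by
  have hc : c ≠ 0 := ((norm_nonneg v).trans_lt hvc).ne'
  have hv : ‖v‖ ≠ 0 := norm_ne_zero_iff.mpr hv
  rw [boostTime, boostSpace, norm_add_sq_real, real_inner_smul_right, norm_smul,
    Real.norm_eq_abs, mul_pow (|_|), sq_abs, real_inner_comm v u]
  field_simp
  linear_combination (b ^ 2 * ‖v‖ ^ 2 - ⟪v, u⟫ ^ 2) * lorentzFactor_sq_mul hvc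

lemma boostSpace_neg_boost (hvc : ‖v‖ < c) (hv : v ≠ 0) (b : ℝ) (u : E) :
    boostSpace c (-v) (boostTime c v b u) (boostSpace c v b u) = u := by
  have hc : c ≠ 0 := ((norm_nonneg v).trans_lt hvc).ne'
  have hv : ‖v‖ ≠ 0 := norm_ne_zero_iff.mpr hv
  rw [boostSpace, inner_neg_left, inner_boostSpace, lorentzFactor_neg, norm_neg, boostTime]
  nth_rw 1 [boostSpace]
  rw [smul_neg, ← sub_eq_add_neg, add_sub_assoc, ← sub_smul, real_inner_comm u v, add_eq_left]
  refine smul_eq_zero_of_left ?_ v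
  field_simp
  linear_combination ⟪u, v⟫ * lorentzFactor_sq_mul hvc

lemma boostTime_neg_boost (hvc : ‖v‖ < c) (hv : v ≠ 0) (b : ℝ) (u : E) :
    boostTime c (-v) (boostTime c v b u) (boostSpace c v b u) = b := by
  have hc : c ≠ 0 := ((norm_nonneg v).trans_lt hvc).ne'
  have hv : ‖v‖ ≠ 0 := norm_ne_zero_iff.mpr hv
  rw [boostTime_neg, real_inner_comm, inner_boostSpace, boostTime, real_inner_comm u v]
  field_simp
  linear_combination b * lorentzFactor_sq_mul hvc

end Boost

end ProperTime

end

open ProperTime in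
theorem stmt4_general (c : ℝ) (v : EuclideanSpace ℝ (Fin 3))
    (hv0 : 0 < ‖v‖) (hvc : ‖v‖ < c)
    (γ : ℝ) (hγ : γ = (Real.sqrt (1 - ‖v‖ ^ 2 / c ^ 2))⁻¹)
    (u : EuclideanSpace ℝ (Fin 3))
    (b : ℝ) (hb : b = Real.sqrt (c ^ 2 + ‖u‖ ^ 2))
    (ustar : EuclideanSpace ℝ (Fin 3))
    (hustar : ustar = γ⁻¹ • u - ((1 - γ) * (⟪v, u⟫ / (γ * ‖v‖ ^ 2))) • v)
    (u' : EuclideanSpace ℝ (Fin 3)) (hu' : u' = γ • (ustar - (b / c) • v))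
    (b' : ℝ) (hb' : b' = γ * (b - ⟪u, v⟫ / c))
    (u'star : EuclideanSpace ℝ (Fin 3))
    (hu'star : u'star = γ⁻¹ • u' - ((1 - γ) * (⟪v, u'⟫ / (γ * ‖v‖ ^ 2))) • v) :
    0 < b' ∧
    b' = Real.sqrt (c ^ 2 + ‖u'‖ ^ 2) ∧
    u = γ • (u'star + (b' / c) • v) ∧
    b = γ * (b' + ⟪u', v⟫ / c) := by
  have hv : v ≠ 0 := norm_pos_iff.mp hv0
  have hc : 0 < c := hv0.trans hvc
  obtain rfl : γ = lorentzFactor c v := hγ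
  obtain rfl : ustar = perpContraction c v u := hustar
  obtain rfl : u'star = perpContraction c v u' := hu'star
  obtain rfl : b' = boostTime c v b u := hb'
  rw [← boostSpace_eq_smul_perpContraction_sub hvc] at hu'
  subst hu'
  have hb2 : b ^ 2 - ‖u‖ ^ 2 = c ^ 2 := by
    rw [hb, Real.sq_sqrt (by positivity), add_sub_cancel_right]
  have hub : ‖u‖ < b := by
    rw [hb, Real.lt_sqrt (norm_nonneg u)]
    exact lt_add_of_pos_left _ (pow_pos hc 2)
  refine ⟨boostTime_pos hvc hub, ?_, ?_, ?_⟩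
  · rw [← hb2, ← boostTime_sq_sub_norm_boostSpace_sq hvc hv, sub_add_cancel,
      Real.sqrt_sq (boostTime_pos hvc hub).le]
  · rw [← boostSpace_neg_eq_smul_perpContraction_add hvc, boostSpace_neg_boost hvc hv]
  · rw [← boostTime_neg, boostTime_neg_boost hvc hv]

/-- The proper-time group transformations (equations (10) and (11) of the
paper). With `γ := (1 − ‖v‖²/c²)^{−1/2}`, `b := √(c² + ‖u‖²)`,
`u* := u/γ − (1 − γ)(⟨v,u⟩/(γ‖v‖²)) v`, `u′ := γ(u* − (v/c) b)` and
`b′ := γ(b − ⟨u,v⟩/c)`, we have `b′ > 0`, `b′ = √(c² + ‖u′‖²)`, and the inverse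
relations `u = γ(u′* + (v/c) b′)` and `b = γ(b′ + ⟨u′,v⟩/c)`. -/
theorem stmt4 (c : ℝ) (hc : 0 < c) (v : EuclideanSpace ℝ (Fin 3))
    (hv0 : 0 < ‖v‖) (hvc : ‖v‖ < c)
    (γ : ℝ) (hγ : γ = (Real.sqrt (1 - ‖v‖ ^ 2 / c ^ 2))⁻¹)
    (u : EuclideanSpace ℝ (Fin 3))
    (b : ℝ) (hb : b = Real.sqrt (c ^ 2 + ‖u‖ ^ 2))
    (ustar : EuclideanSpace ℝ (Fin 3))
    (hustar : ustar = γ⁻¹ • u - ((1 - γ) * (⟪v, u⟫ / (γ * ‖v‖ ^ 2))) • v)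
    (u' : EuclideanSpace ℝ (Fin 3)) (hu' : u' = γ • (ustar - (b / c) • v))
    (b' : ℝ) (hb' : b' = γ * (b - ⟪u, v⟫ / c))
    (u'star : EuclideanSpace ℝ (Fin 3))
    (hu'star : u'star = γ⁻¹ • u' - ((1 - γ) * (⟪v, u'⟫ / (γ * ‖v‖ ^ 2))) • v) :
    0 < b' ∧
    b' = Real.sqrt (c ^ 2 + ‖u'‖ ^ 2) ∧
    u = γ • (u'star + (b' / c) • v) ∧
    b = γ * (b' + ⟪u', v⟫ / c) :=
  stmt4_general c v hv0 hvc γ hγ u b hb ustar hustar u' hu' b' hb' u'star hu'star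
end

section
/- Let c > 0, b > 0, b′ > 0, γ > 0, ρ, ρ′ ∈ ℝ, and u, v, J ∈ ℝ³. Assume the constitutive relation J = c ρ u / b, the transformation laws b′ ρ′ = γ(b ρ − ⟨J, v⟩/c) and b′ = γ(b − ⟨u, v⟩/c), and that 1 − ⟨u, v⟩/(b c) ≠ 0. Then ρ′ = (ρ − ⟨J, v⟩/(b c)) / (1 − ⟨u, v⟩/(b c)) = ρ · (1 − ⟨u, v⟩/b²) / (1 − ⟨u, v⟩/(b c)). In particular, if u = 0 then ρ′ = ρ. -/
open scoped RealInnerProductSpace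

theorem eq_div_of_lorentz_transform {K : Type*} [Field K] {c b b' γ ρ ρ' s t : K}
    (hc : c ≠ 0) (hb : b ≠ 0) (hγ : γ ≠ 0)
    (hρ' : b' * ρ' = γ * (b * ρ - t / c)) (hb' : b' = γ * (b - s / c))
    (hne : 1 - s / (b * c) ≠ 0) :
    ρ' = (ρ - t / (b * c)) / (1 - s / (b * c)) := by
  rw [eq_div_iff hne]
  refine mul_left_cancel₀ (mul_ne_zero hγ hb) ?_
  calc γ * b * (ρ' * (1 - s / (b * c))) = b' * ρ' := by rw [hb']; field_simp
    _ = γ * b * (ρ - t / (b * c)) := by rw [hρ']; field_simp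

theorem sub_div_mul_eq_mul_one_sub {K : Type*} [Field K] {c : K} (hc : c ≠ 0) (b ρ s : K) :
    ρ - c * ρ / b * s / (b * c) = ρ * (1 - s / b ^ 2) := by
  field_simp

theorem stmt5_general (c b b' γ : ℝ) (hc : 0 < c) (hb : 0 < b) (hγ : 0 < γ)
    (ρ ρ' : ℝ) (u v J : EuclideanSpace ℝ (Fin 3))
    (hJ : J = (c * ρ / b) • u)
    (hρ' : b' * ρ' = γ * (b * ρ - ⟪J, v⟫ / c))
    (hb'eq : b' = γ * (b - ⟪u, v⟫ / c))
    (hne : 1 - ⟪u, v⟫ / (b * c) ≠ 0) :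
    ρ' = (ρ - ⟪J, v⟫ / (b * c)) / (1 - ⟪u, v⟫ / (b * c)) ∧
    ρ' = ρ * (1 - ⟪u, v⟫ / b ^ 2) / (1 - ⟪u, v⟫ / (b * c)) ∧
    (u = 0 → ρ' = ρ) := by
  have h₁ := eq_div_of_lorentz_transform hc.ne' hb.ne' hγ.ne' hρ' hb'eq hne
  have h₂ : ρ' = ρ * (1 - ⟪u, v⟫ / b ^ 2) / (1 - ⟪u, v⟫ / (b * c)) := by
    rwa [hJ, real_inner_smul_left, sub_div_mul_eq_mul_one_sub hc.ne'] at h₁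
  refine ⟨h₁, h₂, fun hu => ?_⟩
  simpa [hu] using h₂

/-- Transformation of the charge density in the proper-time theory
(equations (13)–(15) of the paper). Assuming `J = cρu/b`, `b′ρ′ = γ(bρ − ⟨J,v⟩/c)` and
`b′ = γ(b − ⟨u,v⟩/c)`, with `1 − ⟨u,v⟩/(bc) ≠ 0`, one gets
`ρ′ = (ρ − ⟨J,v⟩/(bc))/(1 − ⟨u,v⟩/(bc)) = ρ(1 − ⟨u,v⟩/b²)/(1 − ⟨u,v⟩/(bc))`;
in particular a charge at rest (`u = 0`) has `ρ′ = ρ`. -/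
theorem stmt5 (c b b' γ : ℝ) (hc : 0 < c) (hb : 0 < b) (hb' : 0 < b') (hγ : 0 < γ)
    (ρ ρ' : ℝ) (u v J : EuclideanSpace ℝ (Fin 3))
    (hJ : J = (c * ρ / b) • u)
    (hρ' : b' * ρ' = γ * (b * ρ - ⟪J, v⟫ / c))
    (hb'eq : b' = γ * (b - ⟪u, v⟫ / c))
    (hne : 1 - ⟪u, v⟫ / (b * c) ≠ 0) :
    ρ' = (ρ - ⟪J, v⟫ / (b * c)) / (1 - ⟪u, v⟫ / (b * c)) ∧
    ρ' = ρ * (1 - ⟪u, v⟫ / b ^ 2) / (1 - ⟪u, v⟫ / (b * c)) ∧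
    (u = 0 → ρ' = ρ) :=
  stmt5_general c b b' γ hc hb hγ ρ ρ' u v J hJ hρ' hb'eq hne
end

section
/- Let e ∈ ℝ, b > 0, s ≠ 0, and r, u, a ∈ ℝ³ with r ≠ 0; write R := ‖r‖ and r_u := r − (R/b) u. Define E := (e (1 − ‖u‖²/b²)/s³) r_u + (e/(b² s³)) (r × (r_u × a)) + (e ⟨u, a⟩/(b⁴ s³)) (r × (u × r)) and B := (e (1 − ‖u‖²/b²)/(R s³)) (r × r_u) + (e/(R b² s³)) (r × (r × (r_u × a))) + (e R ⟨u, a⟩/(b⁴ s³)) (r × u). Then B = (r/R) × E, and consequently ⟨E, B⟩ = 0, i.e. B is orthogonal to E. -/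
open scoped RealInnerProductSpace

/-- The cross product on Euclidean ℝ³. -/
noncomputable def cross3 (u v : EuclideanSpace ℝ (Fin 3)) : EuclideanSpace ℝ (Fin 3) :=
  (WithLp.equiv 2 (Fin 3 → ℝ)).symm
    ![u 1 * v 2 - u 2 * v 1, u 2 * v 0 - u 0 * v 2, u 0 * v 1 - u 1 * v 0]


lemma cross3_self_inner (x y : EuclideanSpace ℝ (Fin 3)) : ⟪y, cross3 x y⟫ = 0 := by
  simp [cross3, PiLp.inner_apply, Fin.sum_univ_three, RCLike.inner_apply]
  ring

lemma norm_sq3 (x : EuclideanSpace ℝ (Fin 3)) : ‖x‖^2 = x 0^2 + x 1^2 + x 2^2 := by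
  rw [EuclideanSpace.norm_eq, Real.sq_sqrt (by positivity)]
  simp [Fin.sum_univ_three]

lemma cross3_smul_right (c : ℝ) (x y : EuclideanSpace ℝ (Fin 3)) :
    cross3 x (c • y) = c • cross3 x y := by
  ext i; fin_cases i <;>
    simp [cross3, Fin.isValue, PiLp.smul_apply, smul_eq_mul] <;> ring

lemma cross3_add_right (x y z : EuclideanSpace ℝ (Fin 3)) :
    cross3 x (y + z) = cross3 x y + cross3 x z := by
  ext i; fin_cases i <;>
    simp [cross3, Fin.isValue, PiLp.add_apply] <;> ring

lemma cross3_smul_left (c : ℝ) (x y : EuclideanSpace ℝ (Fin 3)) :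
    cross3 (c • x) y = c • cross3 x y := by
  ext i; fin_cases i <;>
    simp [cross3, Fin.isValue, PiLp.smul_apply, smul_eq_mul] <;> ring

lemma triple3 (x y : EuclideanSpace ℝ (Fin 3)) :
    cross3 x (cross3 x (cross3 y x)) = (x 0 ^ 2 + x 1 ^ 2 + x 2 ^ 2) • cross3 x y := by
  ext i; fin_cases i <;>
    simp [cross3, Fin.isValue, PiLp.smul_apply, smul_eq_mul] <;> ring

/-- For the electric and magnetic fields of a point charge in the
proper-time formulation (equation (7) of the paper), `B = (r/R) × E`, and hence
`⟨E, B⟩ = 0`. -/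
theorem stmt6 (e b s : ℝ) (hb : 0 < b) (hs : s ≠ 0)
    (r u a : EuclideanSpace ℝ (Fin 3)) (hr : r ≠ 0)
    (R : ℝ) (hR : R = ‖r‖)
    (ru : EuclideanSpace ℝ (Fin 3)) (hru : ru = r - (R / b) • u)
    (E B : EuclideanSpace ℝ (Fin 3))
    (hE : E = (e * (1 - ‖u‖ ^ 2 / b ^ 2) / s ^ 3) • ru
        + (e / (b ^ 2 * s ^ 3)) • cross3 r (cross3 ru a)
        + (e * ⟪u, a⟫ / (b ^ 4 * s ^ 3)) • cross3 r (cross3 u r))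
    (hB : B = (e * (1 - ‖u‖ ^ 2 / b ^ 2) / (R * s ^ 3)) • cross3 r ru
        + (e / (R * b ^ 2 * s ^ 3)) • cross3 r (cross3 r (cross3 ru a))
        + (e * R * ⟪u, a⟫ / (b ^ 4 * s ^ 3)) • cross3 r u) :
    B = cross3 (R⁻¹ • r) E ∧ ⟪E, B⟫ = 0 := by
  have hR0 : R ≠ 0 := by rw [hR]; exact norm_ne_zero_iff.mpr hr
  have hb0 : b ≠ 0 := ne_of_gt hb
  have hnorm : r 0 ^ 2 + r 1 ^ 2 + r 2 ^ 2 = R ^ 2 := by rw [hR, norm_sq3]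
  have hmain : B = cross3 (R⁻¹ • r) E := by
    rw [hB, hE, cross3_smul_left, cross3_add_right, cross3_add_right,
      cross3_smul_right, cross3_smul_right, cross3_smul_right, triple3, hnorm]
    match_scalars <;> field_simp <;> (first | ring1 | exact Or.inl (by ring1))
  exact ⟨hmain, by rw [hmain]; exact cross3_self_inner _ _⟩
end

section
/- Let m > 0, c > 0, and e ≠ 0. Define the Coulomb potential V(r) := −e²/r for r > 0, the classical electron radius r₀ := e²/(m c²), and the radial force f(r) := −V′(r) · (1 + V(r)/(m c²)) for r > 0. Then f(r₀) = 0; f(r) > 0 (repulsive) for 0 < r < r₀; and f(r) < 0 (attractive) for r > r₀. In particular r₀ is the unique zero of f on (0, ∞). -/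
lemma coulomb_deriv (e r : ℝ) (hr : r ≠ 0) :
    deriv (fun r : ℝ => -e ^ 2 / r) r = e ^ 2 / r ^ 2 := by
  have h := (hasDerivAt_inv hr).const_mul (-e ^ 2)
  have h2 : -e ^ 2 * -(r ^ 2)⁻¹ = e ^ 2 / r ^ 2 := by field_simp
  have h' : HasDerivAt (fun r : ℝ => -e ^ 2 / r) (e ^ 2 / r ^ 2) r := by
    rw [← h2]; simpa [div_eq_mul_inv] using h
  exact h'.deriv

/-- Classical impenetrability in the canonical proper-time theory. For the
Coulomb potential `V(r) = −e²/r`, the classical electron radius `r₀ = e²/(mc²)` and the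
radial force `f(r) = −V′(r)(1 + V(r)/(mc²))`, we have `f(r₀) = 0`, `f > 0` on `(0, r₀)`,
`f < 0` on `(r₀, ∞)`, and `r₀` is the unique zero of `f` on `(0, ∞)`. -/
theorem stmt10 (m c e : ℝ) (hm : 0 < m) (hc : 0 < c) (he : e ≠ 0)
    (V : ℝ → ℝ) (hV : V = fun r => -e ^ 2 / r)
    (r₀ : ℝ) (hr₀ : r₀ = e ^ 2 / (m * c ^ 2))
    (f : ℝ → ℝ) (hf : f = fun r => -(deriv V r) * (1 + V r / (m * c ^ 2))) :
    f r₀ = 0 ∧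
    (∀ r, 0 < r → r < r₀ → 0 < f r) ∧
    (∀ r, r₀ < r → f r < 0) ∧
    (∀ r, 0 < r → (f r = 0 ↔ r = r₀)) := by
  have he2 : 0 < e ^ 2 := by positivity
  have hmc : 0 < m * c ^ 2 := by positivity
  have hr₀pos : 0 < r₀ := by rw [hr₀]; positivity
  have key : ∀ r : ℝ, 0 < r →
      f r = e ^ 2 / r ^ 2 * ((r₀ - r) * (e ^ 2 / (r * r₀ * (m * c ^ 2)))) := by
    intro r hr
    have hrne : r ≠ 0 := ne_of_gt hr
    rw [hf, hV]
    simp only [coulomb_deriv e r hrne]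
    rw [hr₀]
    field_simp
    ring
  have hfr₀ : f r₀ = 0 := by rw [key r₀ hr₀pos]; simp
  refine ⟨hfr₀, ?_, ?_, ?_⟩
  · intro r hr hlt
    rw [key r hr]
    have : 0 < r₀ - r := by linarith
    positivity
  · intro r hlt
    have hr : 0 < r := lt_trans hr₀pos hlt
    rw [key r hr]
    have h1 : r₀ - r < 0 := by linarith
    have h2 : 0 < e ^ 2 / r ^ 2 := by positivity
    have h3 : 0 < e ^ 2 / (r * r₀ * (m * c ^ 2)) := by positivity
    exact mul_neg_of_pos_of_neg h2 (mul_neg_of_neg_of_pos h1 h3)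
  · intro r hr
    constructor
    · intro h0
      rw [key r hr] at h0
      have h2 : (e ^ 2 / r ^ 2 : ℝ) ≠ 0 := by positivity
      have h3 : (e ^ 2 / (r * r₀ * (m * c ^ 2)) : ℝ) ≠ 0 := by positivity
      have := mul_eq_zero.mp h0
      rcases this with h | h
      · exact absurd h h2
      · rcases mul_eq_zero.mp h with h | h
        · linarith [sub_eq_zero.mp h]
        · exact absurd h h3
    · intro h; rw [h]; exact hfr₀
end

section
/- Let c > 0 and v ∈ ℝ³ with 0 < ‖v‖ < c, and γ := (1 − ‖v‖²/c²)^{−1/2}. For w ∈ ℝ³ define w* := w/γ − (1 − γ)(⟨v, w⟩/(γ‖v‖²)) v. Let u : ℝ → ℝ³ be differentiable, let b(τ) := √(c² + ‖u(τ)‖²), a(τ) := u′(τ), and define u′ᵥ(τ) := γ( (u(τ))* − (v/c) b(τ) ). Then u′ᵥ is differentiable and (u′ᵥ)′(τ) = γ( (a(τ))* − (⟨u(τ), a(τ)⟩/(b(τ) c)) v ) for all τ. -/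
open scoped RealInnerProductSpace

section

variable {E : Type*} [NormedAddCommGroup E] [InnerProductSpace ℝ E] {u : ℝ → E} {u' : E} {τ : ℝ}

theorem HasDerivAt.sqrt_const_add_norm_sq {k : ℝ} (hk : 0 < k) (hu : HasDerivAt u u' τ) :
    HasDerivAt (fun t => √(k + ‖u t‖ ^ 2)) (⟪u τ, u'⟫ / √(k + ‖u τ‖ ^ 2)) τ := by
  have hpos : 0 < k + ‖u τ‖ ^ 2 := by positivity
  convert (hu.norm_sq.const_add k).sqrt hpos.ne' using 1
  field_simp

theorem HasDerivAt.smul_sub_inner_smul (s r q : ℝ) (v : E) (hu : HasDerivAt u u' τ) :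
    HasDerivAt (fun t => s • u t - (r * (⟪v, u t⟫ / q)) • v)
      (s • u' - (r * (⟪v, u'⟫ / q)) • v) τ := by
  have hinner : HasDerivAt (fun t => ⟪v, u t⟫) ⟪v, u'⟫ τ := by
    simpa using (hasDerivAt_const τ v).inner ℝ hu
  exact (hu.const_smul s).sub (((hinner.div_const q).const_mul r).smul_const v)

end

theorem stmt11_general (c : ℝ) (hc : 0 < c) (v : EuclideanSpace ℝ (Fin 3))
    (γ : ℝ)
    (star : EuclideanSpace ℝ (Fin 3) → EuclideanSpace ℝ (Fin 3))
    (hstar : star = fun w => γ⁻¹ • w - ((1 - γ) * (⟪v, w⟫ / (γ * ‖v‖ ^ 2))) • v)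
    (u : ℝ → EuclideanSpace ℝ (Fin 3)) (hu : Differentiable ℝ u)
    (b : ℝ → ℝ) (hb : b = fun τ => Real.sqrt (c ^ 2 + ‖u τ‖ ^ 2))
    (a : ℝ → EuclideanSpace ℝ (Fin 3)) (ha : a = deriv u)
    (u'v : ℝ → EuclideanSpace ℝ (Fin 3))
    (hu'v : u'v = fun τ => γ • (star (u τ) - (b τ / c) • v)) :
    Differentiable ℝ u'v ∧
    ∀ τ, deriv u'v τ = γ • (star (a τ) - (⟪u τ, a τ⟫ / (b τ * c)) • v) := by
  have hderiv (τ : ℝ) :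
      HasDerivAt u'v (γ • (star (a τ) - (⟪u τ, a τ⟫ / (b τ * c)) • v)) τ := by
    have hua : HasDerivAt u (a τ) τ := ha ▸ (hu τ).hasDerivAt
    have hstar' : HasDerivAt (fun t => star (u t)) (star (a τ)) τ :=
      hstar ▸ hua.smul_sub_inner_smul _ _ _ v
    have hb' : HasDerivAt b (⟪u τ, a τ⟫ / b τ) τ :=
      hb ▸ hua.sqrt_const_add_norm_sq (pow_pos hc 2)
    rw [← div_div, hu'v]
    exact (hstar'.sub ((hb'.div_const c).smul_const v)).const_smul γ
  exact ⟨fun τ => (hderiv τ).differentiableAt, fun τ => (hderiv τ).deriv⟩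

/-- The acceleration transformation law of the proper-time group
(equation (10) of the paper). With `w* := w/γ − (1 − γ)(⟨v,w⟩/(γ‖v‖²))v`,
`b(τ) := √(c² + ‖u(τ)‖²)`, `a := u′` and `u′ᵥ(τ) := γ((u(τ))* − (v/c)b(τ))`, the map
`u′ᵥ` is differentiable with
`(u′ᵥ)′(τ) = γ((a(τ))* − (⟨u(τ),a(τ)⟩/(b(τ)c))v)`. -/
theorem stmt11 (c : ℝ) (hc : 0 < c) (v : EuclideanSpace ℝ (Fin 3))
    (hv0 : 0 < ‖v‖) (hvc : ‖v‖ < c)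
    (γ : ℝ) (hγ : γ = (Real.sqrt (1 - ‖v‖ ^ 2 / c ^ 2))⁻¹)
    (star : EuclideanSpace ℝ (Fin 3) → EuclideanSpace ℝ (Fin 3))
    (hstar : star = fun w => γ⁻¹ • w - ((1 - γ) * (⟪v, w⟫ / (γ * ‖v‖ ^ 2))) • v)
    (u : ℝ → EuclideanSpace ℝ (Fin 3)) (hu : Differentiable ℝ u)
    (b : ℝ → ℝ) (hb : b = fun τ => Real.sqrt (c ^ 2 + ‖u τ‖ ^ 2))
    (a : ℝ → EuclideanSpace ℝ (Fin 3)) (ha : a = deriv u)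
    (u'v : ℝ → EuclideanSpace ℝ (Fin 3))
    (hu'v : u'v = fun τ => γ • (star (u τ) - (b τ / c) • v)) :
    Differentiable ℝ u'v ∧
    ∀ τ, deriv u'v τ = γ • (star (a τ) - (⟪u τ, a τ⟫ / (b τ * c)) • v) :=
  stmt11_general c hc v γ star hstar u hu b hb a ha u'v hu'v
end

section
/- Let c > 0, H > 0, and P ∈ ℝ³ with H > c‖P‖. Define the effective mass M by M c² := √(H² − c² ‖P‖²), the global velocity U := P/M, b := √(c² + ‖U‖²), and the canonical proper-time Hamiltonian K := H²/(2 M c²) + M c²/2. Then: (a) H = M c b; and (b) K = ‖P‖²/(2M) + M c². -/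
/-! Writing `m := M c²` for the rest energy, the definition of `M` is the mass-shell relation
`H² = m² + c² ‖P‖²`. Since `‖U‖ = ‖P‖ / M`, both sides of (a) are nonnegative with square
`M² c⁴ + c² ‖P‖²`, and (b) is the mass-shell relation divided by `2 m`. -/

namespace Relativistic

variable {c H p M : ℝ}

theorem sq_sub_sq_mul_pos (hcp₀ : 0 ≤ c * p) (hcp : c * p < H) :
    0 < H ^ 2 - c ^ 2 * p ^ 2 := by
  rw [sub_pos, ← mul_pow]
  exact pow_lt_pow_left₀ hcp hcp₀ two_ne_zero

theorem sq_eq_sq_add_of_mul_sq_eq_sqrt (hcp₀ : 0 ≤ c * p) (hcp : c * p < H)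
    (hM : M * c ^ 2 = √(H ^ 2 - c ^ 2 * p ^ 2)) :
    H ^ 2 = (M * c ^ 2) ^ 2 + c ^ 2 * p ^ 2 := by
  rw [hM, Real.sq_sqrt (sq_sub_sq_mul_pos hcp₀ hcp).le]
  ring

theorem pos_of_mul_sq_eq_sqrt (hc : 0 < c) (hp : 0 ≤ p) (hcp : c * p < H)
    (hM : M * c ^ 2 = √(H ^ 2 - c ^ 2 * p ^ 2)) : 0 < M := by
  have hpos := sq_sub_sq_mul_pos (mul_nonneg hc.le hp) hcp
  have hMc : 0 < M * c ^ 2 := hM ▸ Real.sqrt_pos.mpr hpos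
  exact pos_of_mul_pos_left hMc (by positivity)

theorem eq_mul_sqrt_of_sq_eq (hc : 0 ≤ c) (hM : 0 < M) (hH : 0 ≤ H)
    (hshell : H ^ 2 = (M * c ^ 2) ^ 2 + c ^ 2 * p ^ 2) :
    H = M * c * √(c ^ 2 + (p / M) ^ 2) := by
  have hsq : (M * c) ^ 2 * (c ^ 2 + (p / M) ^ 2) = H ^ 2 := by
    rw [hshell]
    field_simp
  rw [← Real.sqrt_sq (by positivity : 0 ≤ M * c), ← Real.sqrt_mul (sq_nonneg _), hsq,
    Real.sqrt_sq hH]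

theorem sq_div_add_eq_of_sq_eq (hc : c ≠ 0) (hM : M ≠ 0)
    (hshell : H ^ 2 = (M * c ^ 2) ^ 2 + c ^ 2 * p ^ 2) :
    H ^ 2 / (2 * M * c ^ 2) + M * c ^ 2 / 2 = p ^ 2 / (2 * M) + M * c ^ 2 := by
  rw [hshell]
  field_simp
  ring

end Relativistic

open Relativistic in
theorem stmt12_general (c H : ℝ) (hc : 0 < c)
    (P : EuclideanSpace ℝ (Fin 3)) (hHP : c * ‖P‖ < H)
    (M : ℝ) (hM : M * c ^ 2 = Real.sqrt (H ^ 2 - c ^ 2 * ‖P‖ ^ 2))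
    (U : EuclideanSpace ℝ (Fin 3)) (hU : U = M⁻¹ • P)
    (b : ℝ) (hb : b = Real.sqrt (c ^ 2 + ‖U‖ ^ 2))
    (K : ℝ) (hK : K = H ^ 2 / (2 * M * c ^ 2) + M * c ^ 2 / 2) :
    H = M * c * b ∧ K = ‖P‖ ^ 2 / (2 * M) + M * c ^ 2 := by
  have hcP : 0 ≤ c * ‖P‖ := mul_nonneg hc.le (norm_nonneg P)
  have hshell := sq_eq_sq_add_of_mul_sq_eq_sqrt hcP hHP hM
  have hMpos := pos_of_mul_sq_eq_sqrt hc (norm_nonneg P) hHP hM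
  have hUnorm : ‖U‖ = ‖P‖ / M := by
    rw [hU, norm_smul, norm_inv, Real.norm_of_nonneg hMpos.le, inv_mul_eq_div]
  rw [hb, hK, hUnorm]
  exact ⟨eq_mul_sqrt_of_sq_eq hc.le hMpos (hcP.trans hHP.le) hshell,
    sq_div_add_eq_of_sq_eq hc.ne' hMpos.ne' hshell⟩

/-- For a closed system with total energy `H` and total momentum `P`
satisfying `H > c‖P‖`, the effective mass `M` defined by `Mc² = √(H² − c²‖P‖²)`, the
global velocity `U := P/M` and `b := √(c² + ‖U‖²)` satisfy (a) `H = Mcb` and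
(b) `K := H²/(2Mc²) + Mc²/2 = ‖P‖²/(2M) + Mc²`. -/
theorem stmt12 (c H : ℝ) (hc : 0 < c) (hH : 0 < H)
    (P : EuclideanSpace ℝ (Fin 3)) (hHP : c * ‖P‖ < H)
    (M : ℝ) (hM : M * c ^ 2 = Real.sqrt (H ^ 2 - c ^ 2 * ‖P‖ ^ 2))
    (U : EuclideanSpace ℝ (Fin 3)) (hU : U = M⁻¹ • P)
    (b : ℝ) (hb : b = Real.sqrt (c ^ 2 + ‖U‖ ^ 2))
    (K : ℝ) (hK : K = H ^ 2 / (2 * M * c ^ 2) + M * c ^ 2 / 2) :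
    H = M * c * b ∧ K = ‖P‖ ^ 2 / (2 * M) + M * c ^ 2 :=
  stmt12_general c H hc P hHP M hM U hU b hb K hK
end

section
/- Let c > 0, M > 0, and H ∈ ℝ. Define K := H²/(2 M c²) + M c²/2 and S(τ) := (M c² − K) τ. Then for every P ∈ ℝ³, every differentiable X : ℝ → ℝ³, and every differentiable t : ℝ → ℝ with t′(τ) = H/(M c²), one has for all τ: ⟨P, X′(τ)⟩ − H · t′(τ) = ⟨P, X′(τ)⟩ − K + S′(τ). Equivalently, H²/(M c²) = 2K − M c², so that the one-forms P·dX − H dt and P·dX − K dτ differ by the exact differential dS. -/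
open scoped RealInnerProductSpace

/-- Theorem 3 of the paper in differential form: with
`K := H²/(2Mc²) + Mc²/2` and generating function `S(τ) := (Mc² − K)τ`, along any
trajectory with `dt/dτ = H/(Mc²)` one has
`⟨P, X′⟩ − H·t′ = ⟨P, X′⟩ − K + S′`, equivalently `H²/(Mc²) = 2K − Mc²`; so the
one-forms `P·dX − H dt` and `P·dX − K dτ` differ by the exact differential `dS`. -/
theorem stmt14 (c M H : ℝ) (hc : 0 < c) (hM : 0 < M)
    (K : ℝ) (hK : K = H ^ 2 / (2 * M * c ^ 2) + M * c ^ 2 / 2)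
    (S : ℝ → ℝ) (hS : S = fun τ => (M * c ^ 2 - K) * τ) :
    (∀ (P : EuclideanSpace ℝ (Fin 3)) (X : ℝ → EuclideanSpace ℝ (Fin 3))
        (t : ℝ → ℝ), Differentiable ℝ X → Differentiable ℝ t →
        (∀ τ, deriv t τ = H / (M * c ^ 2)) →
        ∀ τ, ⟪P, deriv X τ⟫ - H * deriv t τ = ⟪P, deriv X τ⟫ - K + deriv S τ) ∧
    H ^ 2 / (M * c ^ 2) = 2 * K - M * c ^ 2 := by
  have hMc : M * c ^ 2 ≠ 0 := by positivity
  have key : H ^ 2 / (M * c ^ 2) = 2 * K - M * c ^ 2 := by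
    rw [hK]; field_simp; ring
  refine ⟨fun P X t _ _ ht τ => ?_, key⟩
  have hderS : deriv S τ = M * c ^ 2 - K := by
    rw [hS, deriv_const_mul_field, deriv_id'']; ring
  rw [ht, hderS]
  have : H * (H / (M * c ^ 2)) = H ^ 2 / (M * c ^ 2) := by ring
  rw [this, key]; ring
end

section
/- Fix n ≥ 1, c > 0, a constant M > 0, and masses m₁, …, mₙ > 0. On the phase space ((ℝ³)ⁿ × (ℝ³)ⁿ) with Poisson bracket {F, G} := Σᵢ ( ⟨∇_{pᵢ}F, ∇_{xᵢ}G⟩ − ⟨∇_{xᵢ}F, ∇_{pᵢ}G⟩ ), let H₁, …, Hₙ be differentiable real-valued functions, H := Σᵢ Hᵢ, K := H²/(2 M c²) + M c²/2, and Kᵢ := Hᵢ²/(2 mᵢ c²) + mᵢ c²/2. Then at every phase-space point where Hᵢ ≠ 0 for all i, and for every differentiable W: {K, W} = Σᵢ ( H mᵢ / (M Hᵢ) ) · {Kᵢ, W}. -/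
/-!
`K` and each `Kᵢ` are functions of `H = Σᵢ Hᵢ` and of `Hᵢ` alone, so by the chain rule
`dK = (H / (M c²)) Σᵢ dHᵢ` and `dKᵢ = (Hᵢ / (mᵢ c²)) dHᵢ`. Where `Hᵢ ≠ 0` the second
relation can be solved for `dHᵢ`, and since `{F, W}` depends linearly on `dF` alone the
identity follows.
-/

/-- The Poisson bracket `{F, G} = Σᵢ(⟨∇_{pᵢ}F, ∇_{xᵢ}G⟩ − ⟨∇_{xᵢ}F, ∇_{pᵢ}G⟩)` on the
`n`-particle phase space `(ℝ³)ⁿ × (ℝ³)ⁿ`, via directional derivatives along the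
standard basis. -/
noncomputable def pbracketN (n : ℕ)
    (F G : (Fin n → EuclideanSpace ℝ (Fin 3)) × (Fin n → EuclideanSpace ℝ (Fin 3)) → ℝ)
    (z : (Fin n → EuclideanSpace ℝ (Fin 3)) × (Fin n → EuclideanSpace ℝ (Fin 3))) : ℝ :=
  ∑ i : Fin n, ∑ j : Fin 3,
    (fderiv ℝ F z (0, Pi.single i (EuclideanSpace.single j 1))
        * fderiv ℝ G z (Pi.single i (EuclideanSpace.single j 1), 0)
      - fderiv ℝ F z (Pi.single i (EuclideanSpace.single j 1), 0)
        * fderiv ℝ G z (0, Pi.single i (EuclideanSpace.single j 1)))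

theorem HasFDerivAt.sq_div_add_const {E : Type*} [NormedAddCommGroup E] [NormedSpace ℝ E]
    {f : E → ℝ} {f' : E →L[ℝ] ℝ} {z : E} (hf : HasFDerivAt f f' z) {μ c : ℝ}
    (hμ : μ ≠ 0) (hc : c ≠ 0) :
    HasFDerivAt (fun x => f x ^ 2 / (2 * μ * c ^ 2) + μ * c ^ 2 / 2)
      ((f z / (μ * c ^ 2)) • f') z := by
  have hφ : HasDerivAt (fun t : ℝ => t ^ 2 / (2 * μ * c ^ 2) + μ * c ^ 2 / 2)
      (f z / (μ * c ^ 2)) (f z) := by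
    refine (((hasDerivAt_pow 2 (f z)).div_const _).add_const _).congr_deriv ?_
    field_simp
    ring
  exact hφ.comp_hasFDerivAt z hf

section PoissonBracket

variable {n : ℕ}
  {F W : (Fin n → EuclideanSpace ℝ (Fin 3)) × (Fin n → EuclideanSpace ℝ (Fin 3)) → ℝ}
  {z : (Fin n → EuclideanSpace ℝ (Fin 3)) × (Fin n → EuclideanSpace ℝ (Fin 3))}

theorem pbracketN_eq_mul_of_fderiv_eq_smul
    {G : (Fin n → EuclideanSpace ℝ (Fin 3)) × (Fin n → EuclideanSpace ℝ (Fin 3)) → ℝ}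
    {κ : ℝ} (hF : fderiv ℝ F z = κ • fderiv ℝ G z) :
    pbracketN n F W z = κ * pbracketN n G W z := by
  simp only [pbracketN, hF, FunLike.coe_smul, Pi.smul_apply, smul_eq_mul,
    Finset.mul_sum]
  exact Finset.sum_congr rfl fun _ _ => Finset.sum_congr rfl fun _ _ => by ring

theorem pbracketN_eq_sum_of_fderiv_eq_sum {ι : Type*} {s : Finset ι}
    {G : ι → (Fin n → EuclideanSpace ℝ (Fin 3)) × (Fin n → EuclideanSpace ℝ (Fin 3)) → ℝ}
    (hF : fderiv ℝ F z = ∑ k ∈ s, fderiv ℝ (G k) z) :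
    pbracketN n F W z = ∑ k ∈ s, pbracketN n (G k) W z := by
  simp only [pbracketN, hF, FunLike.coe_sum, Finset.sum_apply, Finset.sum_mul,
    ← Finset.sum_sub_distrib]
  exact (Finset.sum_congr rfl fun _ _ => Finset.sum_comm).trans Finset.sum_comm

end PoissonBracket

theorem stmt18_general (n : ℕ) (c : ℝ) (hc : 0 < c) (M : ℝ) (hM : 0 < M)
    (m : Fin n → ℝ) (hm : ∀ i, 0 < m i)
    (Hi : Fin n →
      ((Fin n → EuclideanSpace ℝ (Fin 3)) × (Fin n → EuclideanSpace ℝ (Fin 3))) → ℝ)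
    (hHidiff : ∀ i, Differentiable ℝ (Hi i))
    (H : ((Fin n → EuclideanSpace ℝ (Fin 3)) × (Fin n → EuclideanSpace ℝ (Fin 3))) → ℝ)
    (hH : H = fun z => ∑ i, Hi i z)
    (K : ((Fin n → EuclideanSpace ℝ (Fin 3)) × (Fin n → EuclideanSpace ℝ (Fin 3))) → ℝ)
    (hK : K = fun z => (H z) ^ 2 / (2 * M * c ^ 2) + M * c ^ 2 / 2)
    (Ki : Fin n →
      ((Fin n → EuclideanSpace ℝ (Fin 3)) × (Fin n → EuclideanSpace ℝ (Fin 3))) → ℝ)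
    (hKi : Ki = fun i z => (Hi i z) ^ 2 / (2 * m i * c ^ 2) + m i * c ^ 2 / 2) :
    ∀ z, (∀ i, Hi i z ≠ 0) →
      ∀ W : ((Fin n → EuclideanSpace ℝ (Fin 3)) ×
          (Fin n → EuclideanSpace ℝ (Fin 3))) → ℝ,
        Differentiable ℝ W →
        pbracketN n K W z
          = ∑ i, (H z * m i / (M * Hi i z)) * pbracketN n (Ki i) W z := by
  intro z hHi_ne W _
  have hH_diff : DifferentiableAt ℝ H z := hH ▸ DifferentiableAt.fun_sum fun i _ => hHidiff i z
  have hH_fderiv : fderiv ℝ H z = ∑ i, fderiv ℝ (Hi i) z :=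
    hH ▸ (HasFDerivAt.fun_sum fun i _ => (hHidiff i z).hasFDerivAt).fderiv
  have hK_bracket : pbracketN n K W z = H z / (M * c ^ 2) * ∑ i, pbracketN n (Hi i) W z := by
    rw [pbracketN_eq_mul_of_fderiv_eq_smul
        (hK ▸ (hH_diff.hasFDerivAt.sq_div_add_const hM.ne' hc.ne').fderiv),
      pbracketN_eq_sum_of_fderiv_eq_sum hH_fderiv]
  have hKi_bracket i : pbracketN n (Ki i) W z = Hi i z / (m i * c ^ 2) * pbracketN n (Hi i) W z :=
    pbracketN_eq_mul_of_fderiv_eq_smul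
      (hKi ▸ ((hHidiff i z).hasFDerivAt.sq_div_add_const (hm i).ne' hc.ne').fderiv)
  rw [hK_bracket, Finset.mul_sum]
  refine Finset.sum_congr rfl fun i _ => ?_
  rw [hKi_bracket i]
  have := (hm i).ne'
  have := hHi_ne i
  field_simp

/-- Relation between the global and local proper-time dynamics (equations
(20)–(21) of the paper): with `K := H²/(2Mc²) + Mc²/2`, `Kᵢ := Hᵢ²/(2mᵢc²) + mᵢc²/2` and
`H := Σᵢ Hᵢ`, at every point where all `Hᵢ ≠ 0`, for every differentiable `W`,
`{K, W} = Σᵢ (Hmᵢ/(MHᵢ))·{Kᵢ, W}`. -/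
theorem stmt18 (n : ℕ) (hn : 1 ≤ n) (c : ℝ) (hc : 0 < c) (M : ℝ) (hM : 0 < M)
    (m : Fin n → ℝ) (hm : ∀ i, 0 < m i)
    (Hi : Fin n →
      ((Fin n → EuclideanSpace ℝ (Fin 3)) × (Fin n → EuclideanSpace ℝ (Fin 3))) → ℝ)
    (hHidiff : ∀ i, Differentiable ℝ (Hi i))
    (H : ((Fin n → EuclideanSpace ℝ (Fin 3)) × (Fin n → EuclideanSpace ℝ (Fin 3))) → ℝ)
    (hH : H = fun z => ∑ i, Hi i z)
    (K : ((Fin n → EuclideanSpace ℝ (Fin 3)) × (Fin n → EuclideanSpace ℝ (Fin 3))) → ℝ)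
    (hK : K = fun z => (H z) ^ 2 / (2 * M * c ^ 2) + M * c ^ 2 / 2)
    (Ki : Fin n →
      ((Fin n → EuclideanSpace ℝ (Fin 3)) × (Fin n → EuclideanSpace ℝ (Fin 3))) → ℝ)
    (hKi : Ki = fun i z => (Hi i z) ^ 2 / (2 * m i * c ^ 2) + m i * c ^ 2 / 2) :
    ∀ z, (∀ i, Hi i z ≠ 0) →
      ∀ W : ((Fin n → EuclideanSpace ℝ (Fin 3)) ×
          (Fin n → EuclideanSpace ℝ (Fin 3))) → ℝ,
        Differentiable ℝ W →
        pbracketN n K W z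
          = ∑ i, (H z * m i / (M * Hi i z)) * pbracketN n (Ki i) W z :=
  stmt18_general n c hc M hM m hm Hi hHidiff H hH K hK Ki hKi
end
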